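/- Let n > 1 and d > 1 be integers. Set X := {j·d : 0 ≤ j ≤ n}, m := (4n+1)·d + 1, Y := m − X, Z := the integer interval (2nd, (2n+1)d] = {x ∈ ℤ : 2nd < x ≤ (2n+1)d}, and A := X ∪ Y ∪ Z ∪ {2nd}. Then A is a normalised MSTD set with |A+A| = |A−A| + 1. -/

import Mathlib

open Finset Pointwise

/-!
Removing `c = 2nd` leaves a set `A'` with `m - A' = A'`. Hence every sum `a + b` with `b ≠ c`
equals `m + (a - (m - b))`, and `A + A = (m + (A - A)) ∪ {2c}` as soon as every `a - c` is also a
difference `a' - b'` with `b' ∈ A'`. The sum `2c = m - (d + 1)` is new: `A` lies in the blocks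
`{0, d, …, nd}`, `[2nd, (2n+1)d]` and `m - {0, d, …, nd}`, which are more than `d + 1` apart, and
within a block no two elements differ by `d + 1`.
-/

def IsNormalised (A : Finset ℤ) : Prop :=
  0 ∈ A ∧ (∀ a ∈ A, 0 ≤ a) ∧ A.gcd id = 1

section SumsetOfSymmetricSet

variable {G : Type*} [AddCommGroup G] [DecidableEq G] {A : Finset G} {c m : G}

theorem add_self_eq_insert_vadd_sub_self (hc : c ∈ A)
    (hsymm : ∀ a ∈ A, a ≠ c → m - a ∈ A) (hsub : ∀ a ∈ A, a - c ∈ A - A.erase c) :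
    A + A = insert (c + c) (m +ᵥ (A - A)) := by
  have hvadd (a b : G) : m +ᵥ (a - (m - b)) = a + b := by rw [vadd_eq_add]; abel
  ext x
  simp only [mem_insert, mem_vadd_finset, mem_add, mem_sub]
  constructor
  · rintro ⟨a, ha, b, hb, rfl⟩
    by_cases hbc : b = c
    · by_cases hac : a = c
      · exact .inl (by rw [hac, hbc])
      · exact .inr ⟨b - (m - a), ⟨b, hb, m - a, hsymm a ha hac, rfl⟩, by rw [hvadd, add_comm]⟩
    · exact .inr ⟨a - (m - b), ⟨a, ha, m - b, hsymm b hb hbc, rfl⟩, hvadd a b⟩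
  · rintro (rfl | ⟨_, ⟨a, ha, b, hb, rfl⟩, rfl⟩)
    · exact ⟨c, hc, c, hc, rfl⟩
    by_cases hbc : b = c
    · obtain ⟨a', ha', b', hb', hab⟩ := mem_sub.mp (hsub a ha)
      obtain ⟨hb'c, hb'⟩ := mem_erase.mp hb'
      refine ⟨a', ha', m - b', hsymm b' hb' hb'c, ?_⟩
      rw [hbc, ← hab, vadd_eq_add]; abel
    · exact ⟨a, ha, m - b, hsymm b hb hbc, by rw [vadd_eq_add]; abel⟩

theorem card_add_self_eq_card_sub_self_add_one (hc : c ∈ A)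
    (hsymm : ∀ a ∈ A, a ≠ c → m - a ∈ A) (hsub : ∀ a ∈ A, a - c ∈ A - A.erase c)
    (hgap : c + c - m ∉ A - A) :
    #(A + A) = #(A - A) + 1 := by
  have hnot : c + c ∉ m +ᵥ (A - A) := by
    rw [mem_vadd_finset]
    rintro ⟨y, hy, hyc⟩
    exact hgap (by rwa [← hyc, vadd_eq_add, add_sub_cancel_left])
  rw [add_self_eq_insert_vadd_sub_self hc hsymm hsub, card_insert_of_notMem hnot, card_vadd_finset]

end SumsetOfSymmetricSet

/-- `X ∪ (m - X) ∪ Z ∪ {2nd}`, with `Z ∪ {2nd}` written as one interval. -/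
noncomputable def mstdSet (n d : ℤ) : Finset ℤ :=
  (Icc 0 n).image (· * d) ∪ (Icc 0 n).image (fun j => (4 * n + 1) * d + 1 - j * d) ∪
    Icc (2 * n * d) ((2 * n + 1) * d)

namespace mstdSet

variable {n d a : ℤ}

theorem mem_iff : a ∈ mstdSet n d ↔ (∃ j, 0 ≤ j ∧ j ≤ n ∧ j * d = a) ∨
    (∃ j, 0 ≤ j ∧ j ≤ n ∧ (4 * n + 1) * d + 1 - j * d = a) ∨
    (2 * n * d ≤ a ∧ a ≤ (2 * n + 1) * d) := by
  simp only [mstdSet, mem_union, mem_image, mem_Icc, and_assoc, or_assoc]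

theorem mul_mem {j : ℤ} (hj0 : 0 ≤ j) (hjn : j ≤ n) : j * d ∈ mstdSet n d :=
  mem_iff.mpr (.inl ⟨j, hj0, hjn, rfl⟩)

theorem sub_mul_mem {j : ℤ} (hj0 : 0 ≤ j) (hjn : j ≤ n) :
    (4 * n + 1) * d + 1 - j * d ∈ mstdSet n d :=
  mem_iff.mpr (.inr (.inl ⟨j, hj0, hjn, rfl⟩))

theorem mem_of_le_of_le (h₁ : 2 * n * d ≤ a) (h₂ : a ≤ (2 * n + 1) * d) : a ∈ mstdSet n d :=
  mem_iff.mpr (.inr (.inr ⟨h₁, h₂⟩))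

theorem mem_blocks (hd : 0 ≤ d) (ha : a ∈ mstdSet n d) :
    (0 ≤ a ∧ a ≤ n * d ∧ d ∣ a) ∨ (2 * n * d ≤ a ∧ a ≤ (2 * n + 1) * d) ∨
      ((3 * n + 1) * d + 1 ≤ a ∧ a ≤ (4 * n + 1) * d + 1 ∧ d ∣ a - 1) := by
  rcases mem_iff.mp ha with ⟨j, hj0, hjn, rfl⟩ | ⟨j, hj0, hjn, rfl⟩ | hW
  · exact .inl ⟨by positivity, by nlinarith, dvd_mul_left d j⟩
  · exact .inr (.inr ⟨by nlinarith, by nlinarith, ⟨4 * n + 1 - j, by ring⟩⟩)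
  · exact .inr (.inl hW)

theorem nonneg (hn : 0 ≤ n) (hd : 0 ≤ d) (ha : a ∈ mstdSet n d) : 0 ≤ a := by
  rcases mem_blocks hd ha with ⟨ha, -⟩ | ⟨ha, -⟩ | ⟨ha, -⟩ <;> nlinarith

theorem neg_notMem_sub (hn : 1 < n) (hd : 1 < d) : -(d + 1) ∉ mstdSet n d - mstdSet n d := by
  have hnd : 2 * d ≤ n * d := by nlinarith
  have hdvd : ¬ d ∣ d + 1 := fun h ↦ by
    have := Int.le_of_dvd one_pos ((Int.dvd_add_right dvd_rfl).mp h)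
    omega
  rw [mem_sub]
  rintro ⟨a, ha, b, hb, hab⟩
  have hba : b - a = d + 1 := by linarith
  rcases mem_blocks (by omega) ha with ⟨-, ha₂, hda⟩ | ⟨ha₁, ha₂⟩ | ⟨ha₁, -, hda⟩ <;>
    rcases mem_blocks (by omega) hb with ⟨-, hb₂, hdb⟩ | ⟨hb₁, hb₂⟩ | ⟨hb₁, -, hdb⟩ <;>
    try linarith
  · exact hdvd (hba ▸ dvd_sub hdb hda)
  · exact hdvd (hba ▸ sub_sub_sub_cancel_right b a 1 ▸ dvd_sub hdb hda)

theorem sub_mem (ha : a ∈ mstdSet n d) (hac : a ≠ 2 * n * d) :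
    (4 * n + 1) * d + 1 - a ∈ mstdSet n d := by
  rcases mem_iff.mp ha with ⟨j, hj0, hjn, rfl⟩ | ⟨j, hj0, hjn, rfl⟩ | ⟨ha₁, ha₂⟩
  · exact sub_mul_mem hj0 hjn
  · exact (sub_sub_cancel _ (j * d)).symm ▸ mul_mem hj0 hjn
  · have ha₁ : 2 * n * d < a := lt_of_le_of_ne ha₁ (Ne.symm hac)
    exact mem_of_le_of_le (by linarith) (by linarith)

theorem sub_mem_sub_erase (hn : 0 < n) (hd : 0 < d) (ha : a ∈ mstdSet n d) :
    a - 2 * n * d ∈ mstdSet n d - (mstdSet n d).erase (2 * n * d) := by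
  suffices h : ∃ b ∈ mstdSet n d, ∃ b' ∈ mstdSet n d, b' ≠ 2 * n * d ∧ b - b' = a - 2 * n * d by
    obtain ⟨b, hb, b', hb', hb'c, h⟩ := h
    exact mem_sub.mpr ⟨b, hb, b', mem_erase.mpr ⟨hb'c, hb'⟩, h⟩
  rcases mem_iff.mp ha with ⟨j, hj0, hjn, rfl⟩ | ⟨j, hj0, hjn, rfl⟩ | ⟨ha₁, ha₂⟩
  · rcases hjn.lt_or_eq with hjn | rfl
    · exact ⟨(j + 1) * d, mul_mem (by omega) (by omega), (2 * n + 1) * d,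
        mem_of_le_of_le (by linarith) le_rfl, by nlinarith, by ring⟩
    · exact ⟨_, sub_mul_mem hn.le le_rfl, _, sub_mul_mem le_rfl hn.le, by nlinarith, by ring⟩
  · rcases hj0.lt_or_eq with hj0 | rfl
    · exact ⟨2 * n * d + 1, mem_of_le_of_le (by linarith) (by linarith), (j - 1) * d,
        mul_mem (by omega) (by omega), by nlinarith, by ring⟩
    · exact ⟨_, sub_mul_mem hn.le le_rfl, n * d, mul_mem hn.le le_rfl, by nlinarith, by ring⟩
  · rcases ha₂.lt_or_eq with ha₂ | rfl
    · exact ⟨(2 * n + 1) * d, mem_of_le_of_le (by linarith) le_rfl, (4 * n + 1) * d - a,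
        mem_of_le_of_le (by linarith) (by linarith), by linarith, by ring⟩
    · exact ⟨1 * d, mul_mem zero_le_one (by omega), 0 * d, mul_mem le_rfl hn.le, by nlinarith,
        by ring⟩

theorem isNormalised (hn : 0 < n) (hd : 0 < d) : IsNormalised (mstdSet n d) := by
  have hdvd : (mstdSet n d).gcd id ∣ 1 := by
    have h₁ := gcd_dvd (f := id) (mul_mem zero_le_one (by omega) : 1 * d ∈ mstdSet n d)
    have h₂ := gcd_dvd (f := id) (sub_mul_mem le_rfl hn.le : (4 * n + 1) * d + 1 - 0 * d ∈ _)
    simpa using dvd_sub h₂ (h₁.mul_left (4 * n + 1))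
  exact ⟨zero_mul d ▸ mul_mem le_rfl hn.le, fun _ ↦ nonneg hn.le hd.le,
    Int.eq_one_of_dvd_one (Int.nonneg_of_normalize_eq_self normalize_gcd) hdvd⟩

end mstdSet

/-- Theorem 4: for `n, d > 1`, the set `A = X ∪ (m − X) ∪ Z ∪ {2nd}` is a
normalised MSTD set with `|A+A| = |A−A| + 1`. -/
theorem thm4 (n d : ℤ) (hn : 1 < n) (hd : 1 < d)
    (X Y Z A : Finset ℤ) (m : ℤ)
    (hX : X = (Finset.Icc 0 n).image (fun j => j * d))
    (hm : m = (4 * n + 1) * d + 1)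
    (hY : Y = X.image (fun x => m - x))
    (hZ : Z = Finset.Ioc (2 * n * d) ((2 * n + 1) * d))
    (hA : A = X ∪ Y ∪ Z ∪ {2 * n * d}) :
    IsNormalised A ∧ (A + A).card = (A - A).card + 1 := by
  have hAeq : A = mstdSet n d := by
    rw [hA, hZ, hY, hX, hm, image_image, union_assoc, union_singleton,
      Ioc_insert_left (by linarith)]
    rfl
  subst hAeq hm
  have hc : 2 * n * d ∈ mstdSet n d := mstdSet.mem_of_le_of_le le_rfl (by linarith)
  have hgap : 2 * n * d + 2 * n * d - ((4 * n + 1) * d + 1) = -(d + 1) := by ring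
  exact ⟨mstdSet.isNormalised (by omega) (by omega),
    card_add_self_eq_card_sub_self_add_one hc (fun _ ↦ mstdSet.sub_mem)
      (fun _ ↦ mstdSet.sub_mem_sub_erase (by omega) (by omega))
      (hgap ▸ mstdSet.neg_notMem_sub hn hd)⟩
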